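/- Let A := {a ∈ ℝⁿ : a̲ ⪯ a ⪯ ā, a_min ≤ 1ᵀa ≤ a_max} be nonempty. A point v ∈ A is an extreme point of A if and only if either (i) vᵢ ∈ {a̲ᵢ, āᵢ} for all i = 1,…,n, or (ii) there is an index i such that vⱼ ∈ {a̲ⱼ, āⱼ} for all j ≠ i and 1ᵀv ∈ {a_min, a_max}. -/

import Mathlib

/-!
If some coordinate `vᵢ` lies strictly between its bounds and either another coordinate `vⱼ`
does too or the budget is slack, then `v ± t (eᵢ - eⱼ)`, resp. `v ± t eᵢ`, stays in `A` for
small `t`, so `v` is the midpoint of a nontrivial segment in `A`. Conversely, a coordinate or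
budget constraint that is tight at `v` takes an extreme value of its range, so it stays tight
along any open segment through `v` in `A`; in both cases (i) and (ii) the tight constraints
determine `v`.
-/

open Set Filter Topology

theorem Fintype.eq_of_forall_ne_of_sum_eq {ι M : Type*} [Fintype ι] [DecidableEq ι]
    [AddCancelCommMonoid M] {x y : ι → M} (i : ι) (hne : ∀ j ≠ i, x j = y j)
    (hsum : ∑ j, x j = ∑ j, y j) : x = y := by
  have hcompl : ∑ j ∈ {i}ᶜ, x j = ∑ j ∈ {i}ᶜ, y j :=
    Finset.sum_congr rfl fun j hj => hne j (by simpa using hj)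
  funext j
  obtain rfl | hj := eq_or_ne j i
  · rw [Fintype.sum_eq_add_sum_compl j, Fintype.sum_eq_add_sum_compl j y, hcompl] at hsum
    exact add_right_cancel hsum
  · exact hne j hj

theorem map_eq_of_mem_openSegment {𝕜 E F : Type*} [Ring 𝕜] [PartialOrder 𝕜] [AddRightMono 𝕜]
    [AddCommGroup E] [Module 𝕜 E] [AddCommGroup F] [Module 𝕜 F] (f : E →ₗ[𝕜] F)
    {A : Set E} {s : Set F} (hfA : MapsTo f A s) {x x₁ x₂ : E}
    (hx : f x ∈ s.extremePoints 𝕜) (hx₁ : x₁ ∈ A) (hx₂ : x₂ ∈ A)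
    (hseg : x ∈ openSegment 𝕜 x₁ x₂) : f x₁ = f x := by
  refine hx.2 (hfA hx₁) (hfA hx₂) ?_
  rw [← LinearMap.coe_toAffineMap, ← image_openSegment]
  exact mem_image_of_mem _ hseg

theorem notMem_extremePoints_of_eventually_add_smul_mem {E : Type*} [AddCommGroup E]
    [Module ℝ E] {A : Set E} {x w : E} (hw : w ≠ 0)
    (h : ∀ᶠ t in 𝓝 (0 : ℝ), x + t • w ∈ A) : x ∉ A.extremePoints ℝ := by
  intro hx
  obtain ⟨ε, hε, hball⟩ := Metric.eventually_nhds_iff.1 h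
  have hmem : ∀ t : ℝ, |t| < ε → x + t • w ∈ A := fun t ht => hball (by simpa using ht)
  have hseg : x ∈ openSegment ℝ (x + (ε / 2) • w) (x + (-(ε / 2)) • w) :=
    ⟨1 / 2, 1 / 2, by norm_num, by norm_num, by norm_num, by module⟩
  have hfix := hx.2 (hmem _ (by rw [abs_of_pos (half_pos hε)]; linarith))
    (hmem _ (by rw [abs_neg, abs_of_pos (half_pos hε)]; linarith)) hseg
  exact hw (smul_right_injective E (half_pos hε).ne' (by simpa using hfix))

theorem eventually_add_mul_mem_Icc {x d a b : ℝ} (hx : x ∈ Icc a b) (hd : d = 0 ∨ x ∈ Ioo a b) :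
    ∀ᶠ t in 𝓝 (0 : ℝ), x + t * d ∈ Icc a b := by
  obtain rfl | hd := hd
  · simpa using hx
  have hcont : Continuous fun t : ℝ => x + t * d := by fun_prop
  have hlim : Tendsto (fun t : ℝ => x + t * d) (𝓝 0) (𝓝 x) := by simpa using hcont.tendsto 0
  exact (hlim.eventually (Ioo_mem_nhds hd.1 hd.2)).mono fun _ ht => Ioo_subset_Icc_self ht

section boxBudget

variable {ι : Type*} [Fintype ι] (lo hi : ι → ℝ) (amin amax : ℝ)

def boxBudget : Set (ι → ℝ) :=
  {a | (∀ i, a i ∈ Icc (lo i) (hi i)) ∧ ∑ i, a i ∈ Icc amin amax}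

variable {lo hi amin amax} {v : ι → ℝ}

theorem eventually_add_smul_mem_boxBudget (hv : v ∈ boxBudget lo hi amin amax) {w : ι → ℝ}
    (hw : ∀ k, w k = 0 ∨ v k ∈ Ioo (lo k) (hi k))
    (hsum : ∑ k, w k = 0 ∨ ∑ k, v k ∈ Ioo amin amax) :
    ∀ᶠ t in 𝓝 (0 : ℝ), v + t • w ∈ boxBudget lo hi amin amax := by
  have hcoord := eventually_all.2 fun k => eventually_add_mul_mem_Icc (hv.1 k) (hw k)
  refine (hcoord.and (eventually_add_mul_mem_Icc hv.2 hsum)).mono fun t ht => ⟨ht.1, ?_⟩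
  simpa [Finset.sum_add_distrib, Finset.mul_sum] using ht.2

theorem mem_extremePoints_boxBudget (hv : v ∈ boxBudget lo hi amin amax)
    (h : (∀ i, v i = lo i ∨ v i = hi i) ∨
      ∃ i, (∀ j ≠ i, v j = lo j ∨ v j = hi j) ∧ (∑ j, v j = amin ∨ ∑ j, v j = amax)) :
    v ∈ (boxBudget lo hi amin amax).extremePoints ℝ := by
  classical
  refine ⟨hv, fun x hx y hy hseg => ?_⟩
  have hcoord : ∀ j, (v j = lo j ∨ v j = hi j) → x j = v j := fun j hj =>
    map_eq_of_mem_openSegment (LinearMap.proj j) (fun z hz => hz.1 j)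
      (by rwa [LinearMap.proj_apply, extremePoints_Icc ((hv.1 j).1.trans (hv.1 j).2)]) hx hy hseg
  rcases h with hall | ⟨i, hbound, hsum⟩
  · exact funext fun j => hcoord j (hall j)
  · refine Fintype.eq_of_forall_ne_of_sum_eq i (fun j hj => hcoord j (hbound j hj)) ?_
    simpa [LinearMap.sum_apply] using map_eq_of_mem_openSegment (∑ j, LinearMap.proj j) (s := Icc amin amax)
      (fun z hz => by simpa [LinearMap.sum_apply] using hz.2)
      (by simpa [LinearMap.sum_apply, extremePoints_Icc (hv.2.1.trans hv.2.2)] using hsum)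
      hx hy hseg

theorem notMem_extremePoints_boxBudget (hv : v ∈ boxBudget lo hi amin amax) {i : ι}
    (hvi : v i ∈ Ioo (lo i) (hi i))
    (h : (∃ j ≠ i, v j ∈ Ioo (lo j) (hi j)) ∨ ∑ j, v j ∈ Ioo amin amax) :
    v ∉ (boxBudget lo hi amin amax).extremePoints ℝ := by
  classical
  rcases h with ⟨j, hji, hvj⟩ | hsum
  · refine notMem_extremePoints_of_eventually_add_smul_mem (w := Pi.single i 1 - Pi.single j 1)
      (fun h0 => by simpa [hji.symm] using congrFun h0 i)
      (eventually_add_smul_mem_boxBudget hv (fun k => ?_) (.inl (by simp)))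
    obtain rfl | hki := eq_or_ne k i
    · exact .inr hvi
    obtain rfl | hkj := eq_or_ne k j
    · exact .inr hvj
    · exact .inl (by simp [hki, hkj])
  · refine notMem_extremePoints_of_eventually_add_smul_mem (w := Pi.single i 1)
      (Pi.single_ne_zero_iff.2 one_ne_zero)
      (eventually_add_smul_mem_boxBudget hv (fun k => ?_) (.inr hsum))
    obtain rfl | hki := eq_or_ne k i
    · exact .inr hvi
    · exact .inl (by simp [hki])

end boxBudget

theorem box_budget_polytope_extreme_point_iff_general
    {n : ℕ} (lo hi : Fin n → ℝ) (amin amax : ℝ)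
    (A : Set (Fin n → ℝ))
    (hA : A = {a : Fin n → ℝ |
      (∀ i, lo i ≤ a i ∧ a i ≤ hi i) ∧ amin ≤ ∑ i, a i ∧ ∑ i, a i ≤ amax})
    (v : Fin n → ℝ) (hv : v ∈ A) :
    v ∈ Set.extremePoints ℝ A ↔
      ((∀ i, v i = lo i ∨ v i = hi i) ∨
        (∃ i : Fin n, (∀ j, j ≠ i → v j = lo j ∨ v j = hi j) ∧
          (∑ j, v j = amin ∨ ∑ j, v j = amax))) := by
  change A = boxBudget lo hi amin amax at hA
  subst hA
  refine ⟨fun hext => ?_, mem_extremePoints_boxBudget hv⟩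
  by_contra! h
  obtain ⟨⟨i, hlo, hhi⟩, hslack⟩ := h
  have hfree : ∀ j, v j ≠ lo j → v j ≠ hi j → v j ∈ Ioo (lo j) (hi j) := fun j h₁ h₂ =>
    ⟨(hv.1 j).1.lt_of_ne' h₁, (hv.1 j).2.lt_of_ne h₂⟩
  refine notMem_extremePoints_boxBudget hv (hfree i hlo hhi) ?_ hext
  by_cases hbound : ∀ j ≠ i, v j = lo j ∨ v j = hi j
  · obtain ⟨h₁, h₂⟩ := hslack i hbound
    exact .inr ⟨hv.2.1.lt_of_ne' h₁, hv.2.2.lt_of_ne h₂⟩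
  · push Not at hbound
    obtain ⟨j, hji, h₁, h₂⟩ := hbound
    exact .inl ⟨j, hji, hfree j h₁ h₂⟩

/-- Vertex characterization for the box-with-budget polytope
`A = {a : a̲ ⪯ a ⪯ ā, a_min ≤ 1ᵀa ≤ a_max}`: `v ∈ A` is an extreme point iff
(i) every coordinate is at a bound, or (ii) all coordinates but one are at a
bound and the budget constraint is tight. -/
theorem box_budget_polytope_extreme_point_iff
    {n : ℕ} (lo hi : Fin n → ℝ) (amin amax : ℝ)
    (hbnd : ∀ i, lo i ≤ hi i) (hab : amin ≤ amax)
    (A : Set (Fin n → ℝ))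
    (hA : A = {a : Fin n → ℝ |
      (∀ i, lo i ≤ a i ∧ a i ≤ hi i) ∧ amin ≤ ∑ i, a i ∧ ∑ i, a i ≤ amax})
    (hAne : A.Nonempty) (v : Fin n → ℝ) (hv : v ∈ A) :
    v ∈ Set.extremePoints ℝ A ↔
      ((∀ i, v i = lo i ∨ v i = hi i) ∨
        (∃ i : Fin n, (∀ j, j ≠ i → v j = lo j ∨ v j = hi j) ∧
          (∑ j, v j = amin ∨ ∑ j, v j = amax))) :=
  box_budget_polytope_extreme_point_iff_general lo hi amin amax A hA v hv
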